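/- Assume the trace class condition ∑_{n≥0}(|a_n - 1/2| + |b_n|) < ∞. Let ζ ∈ ℂ with 0 < |ζ| < 1, set z = (ζ + ζ⁻¹)/2, and let f = (f_n)_{n≥-1} be a solution of the Jacobi equation at z with f_n ζ^{-n} → 1. Define the Jost function Ω(z) = ζ f_{-1}. Then lim_{n→∞} ζⁿ P_n(z) = Ω(z) / (1 - ζ²). -/

import Mathlib

/-!
The Wronskian `aₙ (fₙ Pₙ₊₁ - fₙ₊₁ Pₙ)` of two solutions is independent of `n`; for `f` and `P`
it equals `f₋₁ / 2` because `P₋₁ = 0`, `P₀ = 1`. Dividing by `aₙ fₙ fₙ₊₁` (reduction of order)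
gives `Pₙ = fₙ (P_N / f_N + (f₋₁ / 2) ∑_{N≤k<n} (aₖ fₖ fₖ₊₁)⁻¹)` on a tail `n ≥ N` where `f`
does not vanish. Since `fₖ ~ ζᵏ` and `aₖ → 1/2`, the `k`-th summand is `ζ^{-2k-1}` times a
sequence tending to `2`, so `ζ²ⁿ ∑_{N≤k<n}` is a convolution with the geometric sequence `(ζ²)ʲ`
and tends to `2ζ / (1 - ζ²)`. Finally `ζⁿ Pₙ = (fₙ / ζⁿ) ζ²ⁿ (P_N / f_N + ⋯)` with `fₙ / ζⁿ → 1`.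
-/

open Filter Finset MeasureTheory

noncomputable section

/-- Extended coefficient sequence with `a₋₁ = 1/2`. -/
def aext (a : ℕ → ℝ) : ℤ → ℝ := fun k => if k < 0 then 1/2 else a k.toNat

/-- `u : ℤ → ℂ` (restricted to indices `n ≥ -1`) solves the Jacobi equation
`a_{n-1} u_{n-1} + b_n u_n + a_n u_{n+1} = z u_n` for all `n ≥ 0`, with `a_{-1} = 1/2`. -/
def IsJacobiSol (a b : ℕ → ℝ) (z : ℂ) (u : ℤ → ℂ) : Prop :=
  ∀ n : ℕ, (aext a ((n : ℤ) - 1) : ℂ) * u ((n : ℤ) - 1) + (b n : ℂ) * u (n : ℤ)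
      + (a n : ℂ) * u ((n : ℤ) + 1) = z * u (n : ℤ)

/-- The perturbation `V = H - H₀` applied to a sequence:
`(Vf)_m = (a_{m-1} - 1/2) f_{m-1} + b_m f_m + (a_m - 1/2) f_{m+1}` with `a_{-1} = 1/2`. -/
def jV (a b : ℕ → ℝ) (f : ℤ → ℂ) (m : ℕ) : ℂ :=
  ((aext a ((m : ℤ) - 1) - 1/2 : ℝ) : ℂ) * f ((m : ℤ) - 1) + (b m : ℂ) * f (m : ℤ)
    + ((a m - 1/2 : ℝ) : ℂ) * f ((m : ℤ) + 1)

theorem tendsto_sum_range_pow_sub_mul {K : Type*} [NormedField K] [CompleteSpace K]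
    {w : K} (hw : ‖w‖ < 1) {v : ℕ → K} {L : K} (hv : Tendsto v atTop (nhds L)) :
    Tendsto (fun n => ∑ k ∈ range n, w ^ (n - k) * v k) atTop (nhds (w * (1 - w)⁻¹ * L)) := by
  obtain ⟨C, hC⟩ : ∃ C, ∀ k, ‖v k‖ ≤ C := by
    obtain ⟨C, hC⟩ := hv.norm.bddAbove_range
    exact ⟨C, fun k => hC ⟨k, rfl⟩⟩
  -- reversing the order of summation turns the sum into a Tannery-type series in `i = n - 1 - k`
  let F : ℕ → ℕ → K := fun n i => if i < n then w ^ (i + 1) * v (n - 1 - i) else 0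
  have hF : ∀ n, ∑ k ∈ range n, w ^ (n - k) * v k = ∑' i, F n i := by
    intro n
    rw [tsum_eq_sum (s := range n) (fun i hi => if_neg (by simpa using hi)),
      ← sum_range_reflect]
    refine sum_congr rfl fun i hi => ?_
    rw [if_pos (mem_range.1 hi), show n - (n - 1 - i) = i + 1 by
      have := mem_range.1 hi; omega]
  have hF_lim : ∀ i, Tendsto (fun n => F n i) atTop (nhds (w ^ (i + 1) * L)) := by
    intro i
    refine ((hv.comp ((tendsto_sub_atTop_nat i).comp (tendsto_sub_atTop_nat 1))).const_mul
      (w ^ (i + 1))).congr' ?_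
    filter_upwards [eventually_gt_atTop i] with n hn
    simp [F, hn]
  have hF_bound : ∀ n i, ‖F n i‖ ≤ ‖w‖ ^ (i + 1) * C := by
    intro n i
    have hC0 : 0 ≤ C := (norm_nonneg _).trans (hC 0)
    by_cases hi : i < n
    · simpa [F, hi, norm_pow] using mul_le_mul_of_nonneg_left (hC _) (by positivity)
    · simpa [F, hi] using mul_nonneg (pow_nonneg (norm_nonneg w) (i + 1)) hC0
  have hsummable : Summable fun i : ℕ => ‖w‖ ^ (i + 1) * C := by
    simpa [pow_succ] using
      ((summable_geometric_of_lt_one (norm_nonneg w) hw).mul_right ‖w‖).mul_right C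
  have hgeom : ∑' i : ℕ, w ^ (i + 1) * L = w * (1 - w)⁻¹ * L := by
    simp_rw [tsum_mul_right, pow_succ', tsum_mul_left, tsum_geometric_of_norm_lt_one hw]
  rw [← hgeom]
  simpa only [← hF] using
    tendsto_tsum_of_dominated_convergence hsummable hF_lim (Eventually.of_forall hF_bound)

theorem eq_mul_add_sum_of_wronskian {K : Type*} [Field K] {f g c : ℕ → K} {β : K}
    (hf : ∀ k, f k ≠ 0) (hc : ∀ k, c k ≠ 0)
    (hW : ∀ k, c k * (f k * g (k + 1) - f (k + 1) * g k) = β) (n : ℕ) :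
    g n = f n * (g 0 / f 0 + β * ∑ k ∈ range n, (c k * f k * f (k + 1))⁻¹) := by
  induction n with
  | zero => simp [mul_div_cancel₀ _ (hf 0)]
  | succ n ih =>
    have hquot : g n / f n = g 0 / f 0 + β * ∑ k ∈ range n, (c k * f k * f (k + 1))⁻¹ := by
      rw [ih, mul_div_cancel_left₀ _ (hf n)]
    rw [sum_range_succ, mul_add β, ← add_assoc, ← hquot, ← hW n]
    field_simp [hf n, hf (n + 1), hc n]
    ring

section WronskianAsymptotics

variable {K : Type*} [NormedField K] [CompleteSpace K] {f g c : ℕ → K} {ζ β γ ℓ : K}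

theorem tendsto_pow_mul_of_wronskian_of_ne_zero (hζ : ζ ≠ 0) (hζ1 : ‖ζ‖ < 1)
    (hf : ∀ k, f k ≠ 0) (hc : ∀ k, c k ≠ 0)
    (hfℓ : Tendsto (fun k => f k / ζ ^ k) atTop (nhds ℓ)) (hℓ : ℓ ≠ 0)
    (hcγ : Tendsto c atTop (nhds γ)) (hγ : γ ≠ 0)
    (hW : ∀ k, c k * (f k * g (k + 1) - f (k + 1) * g k) = β) :
    Tendsto (fun n => ζ ^ n * g n) atTop (nhds (β / (γ * ℓ) * (ζ / (1 - ζ ^ 2)))) := by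
  have hζ2 : ‖ζ ^ 2‖ < 1 := by
    rw [norm_pow]
    exact pow_lt_one₀ (norm_nonneg ζ) hζ1 two_ne_zero
  have hζ2' : 1 - ζ ^ 2 ≠ 0 := by
    intro h
    rw [← sub_eq_zero.1 h, norm_one] at hζ2
    exact lt_irrefl _ hζ2
  have hinc : Tendsto (fun k => ζ ^ (2 * k + 1) * (c k * f k * f (k + 1))⁻¹) atTop
      (nhds (γ * ℓ * ℓ)⁻¹) := by
    refine (((hcγ.mul hfℓ).mul (hfℓ.comp (tendsto_add_atTop_nat 1))).inv₀
      (by simp [hγ, hℓ])).congr fun k => ?_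
    simp only [Function.comp_apply]
    field_simp [hf k, hf (k + 1), hc k, hζ]
    ring
  have hsum : Tendsto (fun n => ζ ^ (2 * n) * ∑ k ∈ range n, (c k * f k * f (k + 1))⁻¹) atTop
      (nhds (ζ⁻¹ * (ζ ^ 2 * (1 - ζ ^ 2)⁻¹ * (γ * ℓ * ℓ)⁻¹))) := by
    refine ((tendsto_sum_range_pow_sub_mul hζ2 hinc).const_mul ζ⁻¹).congr fun n => ?_
    rw [mul_sum, mul_sum]
    refine sum_congr rfl fun k hk => ?_
    have hpow : (ζ ^ 2) ^ (n - k) * ζ ^ (2 * k + 1) = ζ * ζ ^ (2 * n) := by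
      rw [← pow_mul, ← pow_add, ← pow_succ']
      congr 1
      have := mem_range.1 hk
      omega
    rw [← mul_assoc ((ζ ^ 2) ^ (n - k)), hpow, ← mul_assoc, inv_mul_cancel_left₀ hζ]
  have hgeom : Tendsto (fun n => ζ ^ (2 * n)) atTop (nhds 0) := by
    simpa only [pow_mul] using tendsto_pow_atTop_nhds_zero_of_norm_lt_one hζ2
  have hlim := hfℓ.mul ((hgeom.mul_const (g 0 / f 0)).add (hsum.const_mul β))
  convert hlim using 1
  · ext n
    rw [eq_mul_add_sum_of_wronskian hf hc hW n]
    field_simp [pow_ne_zero n hζ]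
    ring
  · rw [zero_mul, zero_add]
    field_simp

theorem tendsto_pow_mul_of_wronskian (hζ : ζ ≠ 0) (hζ1 : ‖ζ‖ < 1)
    (hfℓ : Tendsto (fun k => f k / ζ ^ k) atTop (nhds ℓ)) (hℓ : ℓ ≠ 0)
    (hcγ : Tendsto c atTop (nhds γ)) (hγ : γ ≠ 0)
    (hW : ∀ k, c k * (f k * g (k + 1) - f (k + 1) * g k) = β) :
    Tendsto (fun n => ζ ^ n * g n) atTop (nhds (β / (γ * ℓ) * (ζ / (1 - ζ ^ 2)))) := by
  obtain ⟨N, hN⟩ : ∃ N, ∀ k ≥ N, f k / ζ ^ k ≠ 0 ∧ c k ≠ 0 :=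
    eventually_atTop.1 ((hfℓ.eventually_ne hℓ).and (hcγ.eventually_ne hγ))
  have hshift : Tendsto (fun m => f (m + N) / ζ ^ m) atTop (nhds (ζ ^ N * ℓ)) := by
    refine ((hfℓ.comp (tendsto_add_atTop_nat N)).const_mul (ζ ^ N)).congr fun m => ?_
    simp only [Function.comp_apply, pow_add]
    field_simp
  have htail := tendsto_pow_mul_of_wronskian_of_ne_zero (g := fun m => g (m + N)) hζ hζ1
    (fun m => (div_ne_zero_iff.1 (hN (m + N) (Nat.le_add_left N m)).1).1)
    (fun m => (hN (m + N) (Nat.le_add_left N m)).2) hshift (mul_ne_zero (pow_ne_zero N hζ) hℓ)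
    (hcγ.comp (tendsto_add_atTop_nat N)) hγ
    (fun m => by simpa only [add_right_comm] using hW (m + N))
  rw [← tendsto_add_atTop_iff_nat N]
  convert htail.const_mul (ζ ^ N) using 1
  · ext m
    simp only [pow_add]
    ring
  · field_simp

end WronskianAsymptotics

theorem aext_natCast (a : ℕ → ℝ) (n : ℕ) : aext a n = a n := by
  simp [aext]

theorem IsJacobiSol.wronskian_eq {a b : ℕ → ℝ} {z : ℂ} {u v : ℤ → ℂ}
    (hu : IsJacobiSol a b z u) (hv : IsJacobiSol a b z v) (n : ℕ) :
    (a n : ℂ) * (u n * v (n + 1) - u (n + 1) * v n) = (u (-1) * v 0 - u 0 * v (-1)) / 2 := by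
  induction n with
  | zero =>
    have hu0 := hu 0
    have hv0 := hv 0
    norm_num [aext] at hu0 hv0 ⊢
    linear_combination u 0 * hv0 - v 0 * hu0
  | succ n ih =>
    have hu1 := hu (n + 1)
    have hv1 := hv (n + 1)
    simp only [Nat.cast_add, Nat.cast_one, add_sub_cancel_right, aext_natCast] at hu1 hv1 ⊢
    linear_combination u (n + 1) * hv1 - v (n + 1) * hu1 + ih

theorem szego_asymptotics_outside_general
    (a b : ℕ → ℝ)
    (htr : Summable (fun n : ℕ => |a n - 1/2| + |b n|))
    (ζ : ℂ) (hζ0 : 0 < ‖ζ‖) (hζ1 : ‖ζ‖ < 1)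
    (z : ℂ)
    (f : ℤ → ℂ) (hf : IsJacobiSol a b z f)
    (hasym : Filter.Tendsto (fun n : ℕ => f (n : ℤ) * ζ ^ (-(n : ℤ))) Filter.atTop (nhds 1))
    (P : ℤ → ℂ) (hP : IsJacobiSol a b z P) (hPm : P (-1) = 0) (hP0 : P 0 = 1) :
    Filter.Tendsto (fun n : ℕ => ζ ^ (n : ℕ) * P (n : ℤ)) Filter.atTop
      (nhds (ζ * f (-1) / (1 - ζ ^ 2))) := by
  have ha : Tendsto (fun n => (a n : ℂ)) atTop (nhds ((1 / 2 : ℝ) : ℂ)) := by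
    have hsum : Summable fun n => |a n - 1 / 2| :=
      htr.of_nonneg_of_le (fun n => abs_nonneg _) fun n => le_add_of_nonneg_right (abs_nonneg _)
    exact (Complex.continuous_ofReal.tendsto _).comp
      (tendsto_iff_norm_sub_tendsto_zero.2 hsum.tendsto_atTop_zero)
  have hW (k : ℕ) : (a k : ℂ) * (f k * P (k + 1 : ℕ) - f (k + 1 : ℕ) * P k) = f (-1) / 2 := by
    push_cast
    simpa [hPm, hP0] using hf.wronskian_eq hP k
  have hf1 : Tendsto (fun k : ℕ => f k / ζ ^ k) atTop (nhds 1) := by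
    simpa only [zpow_neg, zpow_natCast, div_eq_mul_inv] using hasym
  convert tendsto_pow_mul_of_wronskian (g := fun k : ℕ => P k) (norm_pos_iff.1 hζ0) hζ1 hf1
    one_ne_zero ha (by norm_num) hW using 2
  push_cast
  ring

/-- `lim ζⁿ P_n(z) = Ω(z)/(1 - ζ²)` for `z` outside `[-1,1]`, where
`Ω(z) = ζ f_{-1}(z)` is the Jost function. -/
theorem szego_asymptotics_outside
    (a b : ℕ → ℝ) (ha : ∀ n, 0 < a n)
    (htr : Summable (fun n : ℕ => |a n - 1/2| + |b n|))
    (ζ : ℂ) (hζ0 : 0 < ‖ζ‖) (hζ1 : ‖ζ‖ < 1)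
    (z : ℂ) (hz : z = (ζ + ζ⁻¹) / 2)
    (f : ℤ → ℂ) (hf : IsJacobiSol a b z f)
    (hasym : Filter.Tendsto (fun n : ℕ => f (n : ℤ) * ζ ^ (-(n : ℤ))) Filter.atTop (nhds 1))
    (P : ℤ → ℂ) (hP : IsJacobiSol a b z P) (hPm : P (-1) = 0) (hP0 : P 0 = 1) :
    Filter.Tendsto (fun n : ℕ => ζ ^ (n : ℕ) * P (n : ℤ)) Filter.atTop
      (nhds (ζ * f (-1) / (1 - ζ ^ 2))) :=
  szego_asymptotics_outside_general a b htr ζ hζ0 hζ1 z f hf hasym P hP hPm hP0
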